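/- arXiv:0705.3012 — 5 statements merged into one kernel-verified Lean document; each statement's English description precedes it below -/
import Mathlib

section
/- Suppose nonnegative integers p, q, r, s, m with gcd(p,q) = gcd(r,s) = 1, q, s ≥ 1, satisfy p + mq = r + ms and p(q−1) + mq² = r(s−1) + ms². Then p = r and q = s. -/
/-- The intersection counts of a `(p,q)`-satellite determine `(p,q)`: if two pairs of
coprime numbers produce the same counts `p + mq` and `p(q-1) + mq²`, they are equal. -/
theorem stmt_2 (p q r s m : ℕ) (hq : 1 ≤ q) (hs : 1 ≤ s)
    (hpq : Nat.Coprime p q) (hrs : Nat.Coprime r s)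
    (h1 : p + m * q = r + m * s)
    (h2 : p * (q - 1) + m * q ^ 2 = r * (s - 1) + m * s ^ 2) :
    p = r ∧ q = s := by
  obtain ⟨q', rfl⟩ : ∃ q', q = q' + 1 := ⟨q - 1, by omega⟩
  obtain ⟨s', rfl⟩ : ∃ s', s = s' + 1 := ⟨s - 1, by omega⟩
  simp only [Nat.add_sub_cancel] at h2
  have h1' : (p : ℤ) + m * (q' + 1) = r + m * (s' + 1) := by exact_mod_cast h1
  have h2' : (p : ℤ) * q' + m * (q' + 1) ^ 2 = r * s' + m * (s' + 1) ^ 2 := by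
    exact_mod_cast h2
  have key : ((p : ℤ) + m * q' + 2 * m) * ((s' : ℤ) - q') = 0 := by
    linear_combination (s' : ℤ) * h1' - h2'
  rcases mul_eq_zero.mp key with h | h
  · have hp0 : p = 0 ∧ m = 0 := by
      constructor <;> nlinarith [Int.ofNat_nonneg p, Int.ofNat_nonneg m, Int.ofNat_nonneg q']
    obtain ⟨hp, hm⟩ := hp0
    subst hp hm
    have hr : r = 0 := by omega
    subst hr
    have hq1 : q' + 1 = 1 := by simpa [Nat.Coprime] using hpq
    have hs1 : s' + 1 = 1 := by simpa [Nat.Coprime] using hrs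
    omega
  · have hqs : q' = s' := by exact_mod_cast sub_eq_zero.mp h |>.symm
    subst hqs
    exact ⟨by omega, rfl⟩
end

section
/- Let u : ℝ/2qπℤ → ℝ be C¹ with only simple zeros. Then the winding number of the curve t ↦ u'(t) + i·u(t) around the origin over one period equals p, where 2p is the number of zeros of u in one period. -/
/-!
Write `u' + i u = r e^{iθ}` with `r > 0`, so that `u = r sin θ` and `u' = r cos θ`; the zeros of
`u` are exactly the times at which `θ` meets a multiple of `π`. At such a time `t₀` the product
`u'(t₀) u(t)` equals `r(t₀) r(t) sin (θ t - θ t₀)` and has the sign of `t - t₀`, so `θ` crosses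
every level `nπ` upwards. A continuous function crossing a level only upwards meets it at most
once, and meets it in `[a, b)` iff `θ a ≤ nπ < θ b`. Hence the zeros of `u` in `[0, 2qπ)` are in
bijection with the multiples of `π` in `[θ 0, θ (2qπ))`, and since periodicity forces
`θ (2qπ) - θ 0 = 2πk` with `k ≥ 0`, there are exactly `2k` of them.
-/

open Real Set Filter Topology

def CrossesUpward (θ : ℝ → ℝ) (c : ℝ) : Prop :=
  ∀ t, θ t = c → (∀ᶠ s in 𝓝[<] t, θ s < c) ∧ ∀ᶠ s in 𝓝[>] t, c < θ s

namespace CrossesUpward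

variable {θ : ℝ → ℝ} {c a b : ℝ}

theorem le_of_le (hθ : Continuous θ) (h : CrossesUpward θ c) (ha : c ≤ θ a) (hab : a ≤ b) :
    c ≤ θ b := by
  refine IsClosed.Icc_subset_of_forall_mem_nhdsWithin
    ((isClosed_le continuous_const hθ).inter isClosed_Icc) ha ?_ ⟨hab, le_rfl⟩
  rintro x ⟨hx, -⟩
  rcases (show c ≤ θ x from hx).lt_or_eq with hlt | heq
  · exact nhdsWithin_le_nhds (hθ.continuousAt.eventually (eventually_ge_nhds hlt))
  · exact (h x heq.symm).2.mono fun s hs => hs.le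

theorem lt_of_le (hθ : Continuous θ) (h : CrossesUpward θ c) (ha : c ≤ θ a) (hab : a < b) :
    c < θ b := by
  refine (le_of_le hθ h ha hab.le).lt_of_ne fun hb => ?_
  obtain ⟨s, hs, hsab⟩ := ((h b hb.symm).1.and (Ioo_mem_nhdsLT hab)).exists
  exact hs.not_ge (le_of_le hθ h ha hsab.1.le)

theorem lt_of_lt (hθ : Continuous θ) (h : CrossesUpward θ c) (ha : c < θ a) (hab : a ≤ b) :
    c < θ b :=
  hab.eq_or_lt.elim (fun hab => hab ▸ ha) (lt_of_le hθ h ha.le)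

theorem eq_of_eq (hθ : Continuous θ) (h : CrossesUpward θ c) (ha : θ a = c) (hb : θ b = c) :
    a = b := by
  rcases lt_trichotomy a b with hab | hab | hab
  · exact absurd hb (lt_of_le hθ h ha.ge hab).ne'
  · exact hab
  · exact absurd ha (lt_of_le hθ h hb.ge hab).ne'

theorem exists_mem_Ico_eq_iff (hθ : Continuous θ) (h : CrossesUpward θ c) :
    (∃ t ∈ Ico a b, θ t = c) ↔ θ a ≤ c ∧ c < θ b := by
  constructor
  · rintro ⟨t, ⟨hat, htb⟩, rfl⟩
    exact ⟨not_lt.1 fun hlt => (lt_of_lt hθ h hlt hat).ne rfl, lt_of_le hθ h le_rfl htb⟩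
  · rintro ⟨ha, hb⟩
    have hab : a ≤ b := not_lt.1 fun hba => (lt_of_lt hθ h hb hba.le).not_ge ha
    obtain ⟨t, ht, htc⟩ := intermediate_value_Icc hab hθ.continuousOn ⟨ha, hb.le⟩
    exact ⟨t, ⟨ht.1, ht.2.lt_of_ne (by rintro rfl; exact hb.ne' htc)⟩, htc⟩

end CrossesUpward

section Levels

variable {θ : ℝ → ℝ} {ω : ℝ}

theorem monotone_floor_div_of_crossesUpward (hθ : Continuous θ) (hω : 0 < ω)
    (h : ∀ n : ℤ, CrossesUpward θ (n * ω)) : Monotone fun t => ⌊θ t / ω⌋ := by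
  intro a b hab
  refine Int.le_floor.2 ((le_div_iff₀ hω).2 ((h _).le_of_le hθ ?_ hab))
  exact (le_div_iff₀ hω).1 (Int.floor_le _)

theorem ncard_Ico_of_crossesUpward (hθ : Continuous θ) (hω : 0 < ω)
    (h : ∀ n : ℤ, CrossesUpward θ (n * ω)) (a b : ℝ) :
    {t | t ∈ Ico a b ∧ ∃ n : ℤ, θ t = n * ω}.ncard = (⌈θ b / ω⌉ - ⌈θ a / ω⌉).toNat := by
  have hfloor : ∀ n : ℤ, ⌊(n * ω) / ω⌋ = n := fun n => by
    rw [mul_div_cancel_right₀ _ hω.ne', Int.floor_intCast]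
  have himage : (fun t => ⌊θ t / ω⌋) '' {t | t ∈ Ico a b ∧ ∃ n : ℤ, θ t = n * ω} =
      ↑(Finset.Ico ⌈θ a / ω⌉ ⌈θ b / ω⌉) := by
    ext n
    simp only [mem_image, mem_ofPred_eq, Finset.coe_Ico, mem_Ico, Int.ceil_le, Int.lt_ceil,
      div_le_iff₀ hω, lt_div_iff₀ hω, ← (h n).exists_mem_Ico_eq_iff hθ]
    constructor
    · rintro ⟨t, ⟨ht, m, hm⟩, rfl⟩
      exact ⟨t, ht, by rw [hm, hfloor]⟩
    · rintro ⟨t, ht, hn⟩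
      exact ⟨t, ⟨ht, n, hn⟩, by rw [hn, hfloor]⟩
  rw [← Int.card_Ico, ← ncard_coe_finset, ← himage, InjOn.ncard_image]
  rintro s ⟨-, m, hm⟩ t ⟨-, n, hn⟩ hst
  simp only [hm, hn, hfloor] at hst
  subst hst
  exact (h m).eq_of_eq hθ hm hn

end Levels

theorem HasDerivAt.eventually_mul_pos {f : ℝ → ℝ} {f' x : ℝ} (hf : HasDerivAt f f' x)
    (hx : f x = 0) (hf' : f' ≠ 0) :
    (∀ᶠ s in 𝓝[<] x, f' * f s < 0) ∧ ∀ᶠ s in 𝓝[>] x, 0 < f' * f s := by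
  have hpos : ∀ᶠ s in 𝓝[≠] x, 0 < f' * f s / (s - x) := by
    refine ((hf.tendsto_slope.const_mul f').eventually
      (eventually_gt_nhds (mul_self_pos.2 hf'))).mono fun s hs => ?_
    rwa [slope_def_field, hx, sub_zero, ← mul_div_assoc] at hs
  constructor
  · filter_upwards [hpos.filter_mono (nhdsLT_le_nhdsNE x), self_mem_nhdsWithin] with s hs hsx
    have hsx' : s - x < 0 := sub_neg.2 hsx
    simpa [div_mul_cancel₀ _ hsx'.ne] using mul_neg_of_pos_of_neg hs hsx'
  · filter_upwards [hpos.filter_mono (nhdsGT_le_nhdsNE x), self_mem_nhdsWithin] with s hs hsx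
    exact (div_pos_iff_of_pos_right (sub_pos.2 hsx)).1 hs

section Polar

variable {u r θ : ℝ → ℝ}

theorem crossesUpward_of_polar (hu : Differentiable ℝ u) (hθ : Continuous θ)
    (hr : ∀ t, 0 < r t) (hsin : ∀ t, u t = r t * sin (θ t))
    (hcos : ∀ t, deriv u t = r t * cos (θ t)) {c : ℝ} (hc : sin c = 0) :
    CrossesUpward θ c := by
  rintro t rfl
  have hut : u t = 0 := by rw [hsin, hc, mul_zero]
  have hu't : deriv u t ≠ 0 := by
    have hcos_ne : cos (θ t) ≠ 0 := fun h0 => by simpa [hc, h0] using sin_sq_add_cos_sq (θ t)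
    rw [hcos]
    exact mul_ne_zero (hr t).ne' hcos_ne
  -- `sin (θ t) = 0` turns `u' (t) u (s)` into the sine of the angle swept from `t` to `s`
  have hprod : ∀ s, deriv u t * u s = r t * r s * sin (θ s - θ t) := fun s => by
    rw [hcos, hsin, sin_sub, hc]
    ring
  have hnear : ∀ᶠ s in 𝓝 t, |θ s - θ t| < π := by
    have : Tendsto (fun s => θ s - θ t) (𝓝 t) (𝓝 0) := by
      simpa using (hθ.tendsto t).sub_const (θ t)
    exact this.abs.eventually (by simpa using eventually_lt_nhds pi_pos)
  obtain ⟨hleft, hright⟩ := (hu t).hasDerivAt.eventually_mul_pos hut hu't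
  constructor
  · filter_upwards [hleft, nhdsWithin_le_nhds hnear] with s hs hsπ
    rw [hprod] at hs
    have hsin_neg : sin (θ s - θ t) < 0 := neg_of_mul_neg_right hs (mul_pos (hr t) (hr s)).le
    refine sub_neg.1 (not_le.1 fun h0 => hsin_neg.not_ge ?_)
    exact sin_nonneg_of_nonneg_of_le_pi h0 (abs_lt.1 hsπ).2.le
  · filter_upwards [hright, nhdsWithin_le_nhds hnear] with s hs hsπ
    rw [hprod] at hs
    have hsin_pos : 0 < sin (θ s - θ t) := pos_of_mul_pos_right hs (mul_pos (hr t) (hr s)).le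
    refine sub_pos.1 (not_le.1 fun h0 => hsin_pos.not_ge ?_)
    exact sin_nonpos_of_nonpos_of_neg_pi_le h0 (abs_lt.1 hsπ).1.le

end Polar

theorem re_im_of_eq_norm_mul_exp {z : ℂ} {φ : ℝ} (h : z = ‖z‖ * Complex.exp (Complex.I * φ)) :
    z.re = ‖z‖ * cos φ ∧ z.im = ‖z‖ * sin φ := by
  rw [mul_comm Complex.I, Complex.exp_mul_I] at h
  constructor <;> (conv_lhs => rw [h]) <;> simp [Complex.cos_ofReal_re, Complex.sin_ofReal_re]

theorem exists_int_eq_add_of_eq_norm_mul_exp {z : ℂ} {φ ψ : ℝ} (hz : z ≠ 0)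
    (hφ : z = ‖z‖ * Complex.exp (Complex.I * φ)) (hψ : z = ‖z‖ * Complex.exp (Complex.I * ψ)) :
    ∃ k : ℤ, φ = ψ + 2 * π * k := by
  have hexp := mul_left_cancel₀ (Complex.ofReal_ne_zero.2 (norm_ne_zero_iff.2 hz))
    (hφ.symm.trans hψ)
  obtain ⟨k, hk⟩ := Complex.exp_eq_exp_iff_exists_int.1 hexp
  exact ⟨k, by simpa [mul_comm] using congrArg Complex.im hk⟩

theorem stmt_3_general (q : ℕ) (p : ℕ) (u : ℝ → ℝ)
    (hu : ContDiff ℝ 1 u)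
    (hper : ∀ t, u (t + 2 * q * Real.pi) = u t)
    (hnz : ∀ t : ℝ, (u t, deriv u t) ≠ (0, 0))
    (hzeros : ({t : ℝ | t ∈ Set.Ico (0 : ℝ) (2 * q * Real.pi) ∧ u t = 0}).ncard = 2 * p)
    (θ : ℝ → ℝ) (hθ : Continuous θ)
    (hlift : ∀ t : ℝ, Complex.ofReal (deriv u t) + Complex.I * Complex.ofReal (u t) =
        (‖Complex.ofReal (deriv u t) + Complex.I * Complex.ofReal (u t)‖ : ℂ) *
          Complex.exp (Complex.I * (θ t : ℂ))) :
    θ (2 * q * Real.pi) - θ 0 = 2 * Real.pi * p := by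
  set z : ℝ → ℂ := fun t => Complex.ofReal (deriv u t) + Complex.I * Complex.ofReal (u t)
  have hz_lift : ∀ t, z t = ‖z t‖ * Complex.exp (Complex.I * θ t) := hlift
  have hz : ∀ t, z t ≠ 0 := fun t h => hnz t <|
    Prod.ext (by simpa [z] using congrArg Complex.im h) (by simpa [z] using congrArg Complex.re h)
  have hsin : ∀ t, u t = ‖z t‖ * sin (θ t) := fun t => by
    simpa [z] using (re_im_of_eq_norm_mul_exp (hz_lift t)).2
  have hcos : ∀ t, deriv u t = ‖z t‖ * cos (θ t) := fun t => by
    simpa [z] using (re_im_of_eq_norm_mul_exp (hz_lift t)).1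
  have hcross : ∀ n : ℤ, CrossesUpward θ (n * π) := fun n =>
    crossesUpward_of_polar (hu.differentiable one_ne_zero) hθ (fun t => norm_pos_iff.2 (hz t))
      hsin hcos (sin_int_mul_pi n)
  have hperiod : z (2 * q * π) = z 0 := by
    have hderiv : deriv u (2 * q * π) = deriv u 0 := by
      simpa [funext hper] using (deriv_comp_add_const (f := u) (a := 2 * q * π) (x := 0)).symm
    simp [z, hderiv, ← hper 0]
  obtain ⟨k, hk⟩ := exists_int_eq_add_of_eq_norm_mul_exp (hz 0) (hperiod ▸ hz_lift _) (hz_lift 0)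
  have hdiv : θ (2 * q * π) / π = θ 0 / π + ((2 * k : ℤ) : ℝ) := by
    rw [hk]
    push_cast
    field_simp
  have hk0 : 0 ≤ k := by
    have := monotone_floor_div_of_crossesUpward hθ pi_pos hcross
      (show (0 : ℝ) ≤ 2 * q * π by positivity)
    dsimp only at this
    rw [hdiv, Int.floor_add_intCast] at this
    omega
  have hzero_iff : ∀ t, u t = 0 ↔ ∃ n : ℤ, θ t = n * π := fun t => by
    rw [hsin, mul_eq_zero, or_iff_right (norm_ne_zero_iff.2 (hz t)), sin_eq_zero_iff]
    simp only [eq_comm]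
  simp only [hzero_iff] at hzeros
  rw [ncard_Ico_of_crossesUpward hθ pi_pos hcross, hdiv, Int.ceil_add_intCast] at hzeros
  obtain rfl : k = p := by omega
  rw [hk]
  push_cast
  ring

/-- For a `C¹` function `u` of period `2qπ` with only simple zeros (so that
`(u(t), u'(t)) ≠ (0,0)` for all `t`), the winding number of `t ↦ u'(t) + i u(t)`
around the origin over one period equals `p`, where `2p` is the number of zeros
of `u` in one period.  The winding number is expressed through any continuous
argument lift `θ`. -/
theorem stmt_3 (q : ℕ) (hq : 0 < q) (p : ℕ) (u : ℝ → ℝ)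
    (hu : ContDiff ℝ 1 u)
    (hper : ∀ t, u (t + 2 * q * Real.pi) = u t)
    (hnz : ∀ t : ℝ, (u t, deriv u t) ≠ (0, 0))
    (hsimple : ∀ t : ℝ, u t = 0 → deriv u t ≠ 0)
    (hzeros : ({t : ℝ | t ∈ Set.Ico (0 : ℝ) (2 * q * Real.pi) ∧ u t = 0}).ncard = 2 * p)
    (θ : ℝ → ℝ) (hθ : Continuous θ)
    (hlift : ∀ t : ℝ, Complex.ofReal (deriv u t) + Complex.I * Complex.ofReal (u t) =
        (‖Complex.ofReal (deriv u t) + Complex.I * Complex.ofReal (u t)‖ : ℂ) *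
          Complex.exp (Complex.I * (θ t : ℂ))) :
    θ (2 * q * Real.pi) - θ 0 = 2 * Real.pi * p :=
  stmt_3_general q p u hu hper hnz hzeros θ hθ hlift
end

section
/- If the heat semiflow on ℝ/qℤ starts at u with Fourier coefficients u_k, and k₀ = min{k : u_k ≠ 0}, then u(t,·)/‖u(t,·)‖ converges as t → ∞ (in W^{2,2}) to the normalized k₀-th mode: lim_{t→∞} u(t,·)/‖u(t,·)‖_{W^{2,2}} = Re(u_{k₀} e^{2πik₀x/q}) / ‖Re(u_{k₀} e^{2πik₀x/q})‖_{W^{2,2}}. -/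
/-!
Let `λ_k = 4π²k²/q²`. Multiplying the coefficient vector by `e^{λ_{k₀} t}` leaves the
normalized vector unchanged, and the rescaled coefficients `e^{(λ_{k₀} - λ_k) t} c_k` converge to
`c_{k₀} δ_{k k₀}`: modes below `k₀` vanish and those above decay since `λ` is strictly increasing.
Normalization is continuous away from `0`, so the normalized vector converges to the normalized
limit.
-/

open scoped Real
open Filter Topology

variable {ι 𝕜 : Type*} [RCLike 𝕜]

noncomputable def weightedNorm (s : Finset ι) (w : ι → ℝ) (v : ι → 𝕜) : ℝ :=
  √(∑ k ∈ s, w k * ‖v k‖ ^ 2)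

section WeightedNorm

variable (s : Finset ι) (w : ι → ℝ)

theorem continuous_weightedNorm : Continuous (weightedNorm s w : (ι → 𝕜) → ℝ) := by
  unfold weightedNorm
  fun_prop

theorem weightedNorm_ofReal_mul {r : ℝ} (hr : 0 ≤ r) (v : ι → 𝕜) :
    weightedNorm s w (fun k => (r : 𝕜) * v k) = r * weightedNorm s w v := by
  simp only [weightedNorm, norm_mul, RCLike.norm_ofReal, abs_of_nonneg hr]
  have hsum : ∑ k ∈ s, w k * (r * ‖v k‖) ^ 2 = r ^ 2 * ∑ k ∈ s, w k * ‖v k‖ ^ 2 := by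
    rw [Finset.mul_sum]
    exact Finset.sum_congr rfl fun k _ => by ring
  rw [hsum, Real.sqrt_mul (sq_nonneg r), Real.sqrt_sq hr]

theorem ofReal_mul_div_weightedNorm {r : ℝ} (hr : 0 < r) (v : ι → 𝕜) (k : ι) :
    (r : 𝕜) * v k / (weightedNorm s w (fun k => (r : 𝕜) * v k) : 𝕜)
      = v k / (weightedNorm s w v : 𝕜) := by
  rw [weightedNorm_ofReal_mul s w hr.le, RCLike.ofReal_mul,
    mul_div_mul_left _ _ (RCLike.ofReal_ne_zero.2 hr.ne')]

theorem weightedNorm_single [DecidableEq ι] {k₀ : ι} (hk₀ : k₀ ∈ s) (hw : 0 ≤ w k₀) (a : 𝕜) :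
    weightedNorm s w (Pi.single k₀ a) = √(w k₀) * ‖a‖ := by
  rw [weightedNorm, Finset.sum_eq_single_of_mem k₀ hk₀ fun k _ hk => by simp [hk],
    Pi.single_eq_same, Real.sqrt_mul hw, Real.sqrt_sq (norm_nonneg a)]

theorem tendsto_sum_sub_div_weightedNorm {α : Type*} {l : Filter α} {v : α → ι → 𝕜} {a : ι → 𝕜}
    (hv : Tendsto v l (𝓝 a)) (ha : weightedNorm s w a ≠ 0) :
    Tendsto (fun t => ∑ k ∈ s, w k *
      ‖v t k / (weightedNorm s w (v t) : 𝕜) - a k / (weightedNorm s w a : 𝕜)‖ ^ 2) l (𝓝 0) := by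
  have hnorm : Tendsto (fun t => (weightedNorm s w (v t) : 𝕜)) l (𝓝 (weightedNorm s w a)) :=
    (RCLike.continuous_ofReal.tendsto _).comp (((continuous_weightedNorm s w).tendsto a).comp hv)
  have hterm : ∀ k ∈ s, Tendsto (fun t => w k *
      ‖v t k / (weightedNorm s w (v t) : 𝕜) - a k / (weightedNorm s w a : 𝕜)‖ ^ 2) l (𝓝 0) := by
    intro k _
    have := ((((tendsto_pi_nhds.1 hv k).div hnorm (RCLike.ofReal_ne_zero.2 ha)).sub_const
      (a k / (weightedNorm s w a : 𝕜))).norm.pow 2).const_mul (w k)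
    simpa using this
  simpa using tendsto_finsetSum s hterm

end WeightedNorm

theorem tendsto_exp_sub_mul_mul_pi_single [LinearOrder ι] {rate : ι → ℝ} (hrate : StrictMono rate)
    {k₀ : ι} {c : ι → 𝕜} (hmin : ∀ k < k₀, c k = 0) :
    Tendsto (fun t : ℝ => fun k => (Real.exp ((rate k₀ - rate k) * t) : 𝕜) * c k) atTop
      (𝓝 (Pi.single k₀ (c k₀))) := by
  refine tendsto_pi_nhds.2 fun k => ?_
  rcases lt_trichotomy k k₀ with h | rfl | h
  · simp [hmin k h, h.ne]
  · simp
  · have hexp : Tendsto (fun t => Real.exp ((rate k₀ - rate k) * t)) atTop (𝓝 0) :=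
      Real.tendsto_exp_atBot.comp
        (tendsto_id.const_mul_atTop_of_neg (sub_neg.2 (hrate h)))
    simpa [h.ne'] using ((RCLike.continuous_ofReal.tendsto 0).comp hexp).mul_const (c k)

/-- Exponential dominance of the lowest nonzero Fourier mode under the heat flow:
the normalized solution converges in the weighted `W^{2,2}` norm
`‖v‖² = Σ_k (1+k⁴)|v_k|²` to the normalized `k₀`-th mode, where
`k₀ = min {k : u_k ≠ 0}`. -/
theorem stmt_11 (q : ℕ) (hq : 0 < q) (N k₀ : ℕ) (hk₀N : k₀ ≤ N) (c : ℕ → ℂ)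
    (hk₀ : c k₀ ≠ 0) (hmin : ∀ k < k₀, c k = 0)
    (n : ℝ → ℝ)
    (hn : ∀ t, n t = Real.sqrt (∑ k ∈ Finset.range (N + 1),
        (1 + (k : ℝ) ^ 4) * (Real.exp (-(4 * π ^ 2 * k ^ 2 / q ^ 2) * t) * ‖c k‖) ^ 2)) :
    Filter.Tendsto
      (fun t : ℝ => ∑ k ∈ Finset.range (N + 1), (1 + (k : ℝ) ^ 4) *
        ‖(Real.exp (-(4 * π ^ 2 * k ^ 2 / q ^ 2) * t) * c k) / (n t : ℂ) -
          (if k = k₀ then c k₀ / ((Real.sqrt (1 + (k₀ : ℝ) ^ 4) * ‖c k₀‖ : ℝ) : ℂ)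
            else 0)‖ ^ 2)
      Filter.atTop (nhds 0) := by
  set rate : ℕ → ℝ := fun k => 4 * π ^ 2 * k ^ 2 / q ^ 2
  have hrate : StrictMono rate := fun i j hij => by
    have hq' : (0 : ℝ) < q := by exact_mod_cast hq
    simp only [rate]
    gcongr
  set s := Finset.range (N + 1)
  set w : ℕ → ℝ := fun k => 1 + (k : ℝ) ^ 4
  set v : ℝ → ℕ → ℂ := fun t k => (Real.exp ((rate k₀ - rate k) * t) : ℂ) * c k
  have hsplit : ∀ t (k : ℕ), (Real.exp (-(4 * π ^ 2 * k ^ 2 / q ^ 2) * t) : ℂ) * c k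
      = (Real.exp (-rate k₀ * t) : ℂ) * v t k := fun t k => by
    rw [← mul_assoc, ← Complex.ofReal_mul, ← Real.exp_add]
    congr 3
    ring
  have hn' : ∀ t, n t = weightedNorm s w (fun k => (Real.exp (-rate k₀ * t) : ℂ) * v t k) := by
    intro t
    rw [hn, weightedNorm]
    refine congrArg Real.sqrt (Finset.sum_congr rfl fun k _ => ?_)
    rw [← hsplit, norm_mul, Complex.norm_real, Real.norm_of_nonneg (Real.exp_pos _).le]
  have hL : weightedNorm s w (Pi.single k₀ (c k₀)) = √(1 + (k₀ : ℝ) ^ 4) * ‖c k₀‖ :=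
    weightedNorm_single s w (Finset.mem_range.2 (Nat.lt_succ_of_le hk₀N)) (by positivity) _
  have hL0 : weightedNorm s w (Pi.single k₀ (c k₀)) ≠ 0 := by
    rw [hL]
    exact mul_ne_zero (by positivity) (norm_ne_zero_iff.2 hk₀)
  have hlim := tendsto_sum_sub_div_weightedNorm s w
    (tendsto_exp_sub_mul_mul_pi_single hrate hmin) hL0
  refine hlim.congr fun t => Finset.sum_congr rfl fun k _ => ?_
  have hscale := ofReal_mul_div_weightedNorm (𝕜 := ℂ) s w (Real.exp_pos (-rate k₀ * t)) (v t) k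
  simp only [RCLike.ofReal_eq_complex_ofReal] at hscale
  rw [hsplit, hn', hscale, hL, Pi.single_apply, ite_div, zero_div]
  rfl
end

section
/- Let Z = {u ∈ ℝ × ℂ^{p−1} × ℂ : Σ_{k<p}(1+k⁴)|u_k|² + (1+p⁴)|u_p|² = ε²} with the constraint Σ_{k<p}(1+k⁴)|u_k|² ≤ ρε², where 0 < ρ < 1. Then the map u ↦ (u_p/|u_p|, u₀, …, u_{p−1}) is a homeomorphism from Z onto S¹ × B^{2p−1}, carrying the subset where Σ_{k<p}(1+k⁴)|u_k|² = ρε² onto S¹ × ∂B^{2p−1}. -/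
/-- The weighted squared norm `Σ_{k<p} (1+k⁴)|u_k|²` of the low-frequency part
`(u₀, u₁, …, u_{p-1}) ∈ ℝ × ℂ^{p-1}` (where index `j : Fin (p-1)` stands for `k = j+1`). -/
noncomputable def lowNorm (p : ℕ) (v : ℝ × (Fin (p - 1) → ℂ)) : ℝ :=
  v.1 ^ 2 + ∑ j : Fin (p - 1), (1 + ((j : ℕ) + 1 : ℝ) ^ 4) * ‖v.2 j‖ ^ 2

/-- The set `Z`: the sphere `Σ_{k≤p}(1+k⁴)|u_k|² = ε²` with the constraint
`Σ_{k<p}(1+k⁴)|u_k|² ≤ ρε²`. -/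
abbrev Zset (p : ℕ) (ε ρ : ℝ) : Type :=
  {u : (ℝ × (Fin (p - 1) → ℂ)) × ℂ //
    lowNorm p u.1 + (1 + (p : ℝ) ^ 4) * ‖u.2‖ ^ 2 = ε ^ 2 ∧
      lowNorm p u.1 ≤ ρ * ε ^ 2}

/-- The ellipsoidal ball `B^{2p-1} = {(u₀,…,u_{p-1}) : Σ_{k<p}(1+k⁴)|u_k|² ≤ ρε²}`. -/
abbrev BallSet (p : ℕ) (ε ρ : ℝ) : Type :=
  {v : ℝ × (Fin (p - 1) → ℂ) // lowNorm p v ≤ ρ * ε ^ 2}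

/-!
On `Z` the modulus of `u_p` is a function of the low part `v = (u₀, …, u_{p-1})`, namely
`|u_p| = √((ε² - N v)/(1+p⁴))` with `N = lowNorm p`, and it is positive because
`N v ≤ ρε² < ε²`. So `Z` is the circle bundle `{(v, z) : |z| = r v}` over the ball with a
continuous positive radius `r`, which `(v, z) ↦ (z/|z|, v)` trivialises with inverse
`(c, v) ↦ (v, r v • c)`. The base coordinate is untouched, so the boundary goes to the boundary.
-/

open Complex

section CircleBundle

variable {X : Type*} [TopologicalSpace X]

noncomputable def circleBundleHomeomorph (P : X → Prop) (r : X → ℝ) (hr : Continuous r)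
    (hr_pos : ∀ x, P x → 0 < r x) :
    {u : X × ℂ // ‖u.2‖ = r u.1 ∧ P u.1} ≃ₜ Circle × {x // P x} where
  toFun u := (⟨u.1.2 / ‖u.1.2‖, by
      have hz : u.1.2 ≠ 0 := norm_pos_iff.1 (u.2.1 ▸ hr_pos _ u.2.2)
      simp [Submonoid.unitSphere, hz]⟩, ⟨u.1.1, u.2.2⟩)
  invFun c := ⟨(c.2.1, r c.2.1 * c.1), by
    simp [Circle.norm_coe, abs_of_pos (hr_pos _ c.2.2), c.2.2]⟩
  left_inv u := by
    obtain ⟨⟨x, z⟩, hz, hx⟩ := u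
    have hz0 : (‖z‖ : ℂ) ≠ 0 := ofReal_ne_zero.2 (hz ▸ hr_pos x hx).ne'
    ext <;> simp [← hz, mul_div_cancel₀ _ hz0]
  right_inv c := by
    obtain ⟨c, x, hx⟩ := c
    have hr0 : (r x : ℂ) ≠ 0 := ofReal_ne_zero.2 (hr_pos x hx).ne'
    ext <;> simp [Circle.norm_coe, abs_of_pos (hr_pos x hx), mul_div_cancel_left₀ _ hr0]
  continuous_toFun := by
    refine .prodMk (.subtype_mk ?_ _) (.subtype_mk (by fun_prop) _)
    refine .div (by fun_prop) (by fun_prop) fun u => ofReal_ne_zero.2 ?_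
    exact (u.2.1 ▸ hr_pos _ u.2.2).ne'
  continuous_invFun := by fun_prop

theorem norm_eq_sqrt_iff_add_mul_sq_eq {N w E : ℝ} (hw : 0 < w) (hNE : N ≤ E) (z : ℂ) :
    ‖z‖ = √((E - N) / w) ↔ N + w * ‖z‖ ^ 2 = E := by
  rw [eq_comm, Real.sqrt_eq_iff_eq_sq (div_nonneg (sub_nonneg.2 hNE) hw.le) (norm_nonneg z),
    div_eq_iff hw.ne']
  constructor <;> intro h <;> linarith

noncomputable def levelSetHomeomorph (P : X → Prop) (N : X → ℝ) (hN : Continuous N) {w E : ℝ}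
    (hw : 0 < w) (hP : ∀ x, P x → N x < E) :
    {u : X × ℂ // N u.1 + w * ‖u.2‖ ^ 2 = E ∧ P u.1} ≃ₜ Circle × {x // P x} :=
  (Homeomorph.subtype (.refl _) fun u : X × ℂ => and_congr_left fun hu =>
      (norm_eq_sqrt_iff_add_mul_sq_eq hw (hP u.1 hu).le u.2).symm).trans
    (circleBundleHomeomorph P _ (by fun_prop) fun x hx =>
      Real.sqrt_pos.2 (div_pos (sub_pos.2 (hP x hx)) hw))

end CircleBundle

theorem continuous_lowNorm (p : ℕ) : Continuous (lowNorm p) := by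
  unfold lowNorm
  fun_prop

theorem stmt_13_general (p : ℕ) (ε ρ : ℝ) (hε : 0 < ε) (hρ₁ : ρ < 1) :
    ∃ f : Zset p ε ρ ≃ₜ Circle × BallSet p ε ρ,
      (∀ u : Zset p ε ρ,
          ((f u).1 : ℂ) = u.val.2 / (‖u.val.2‖ : ℂ) ∧
            ((f u).2).val = u.val.1) ∧
        ∀ u : Zset p ε ρ,
          lowNorm p u.val.1 = ρ * ε ^ 2 ↔ lowNorm p ((f u).2).val = ρ * ε ^ 2 := by
  have hlt : ∀ v, lowNorm p v ≤ ρ * ε ^ 2 → lowNorm p v < ε ^ 2 := fun v hv =>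
    hv.trans_lt (mul_lt_of_lt_one_left (pow_pos hε 2) hρ₁)
  exact ⟨levelSetHomeomorph _ _ (continuous_lowNorm p) (by positivity) hlt,
    fun _ => ⟨rfl, rfl⟩, fun _ => Iff.of_eq rfl⟩

/-- `Z` is homeomorphic to `S¹ × B^{2p-1}` via `u ↦ (u_p/|u_p|, (u₀, …, u_{p-1}))`,
carrying the subset where `Σ_{k<p}(1+k⁴)|u_k|² = ρε²` onto `S¹ × ∂B^{2p-1}`. -/
theorem stmt_13 (p : ℕ) (hp : 1 ≤ p) (ε ρ : ℝ) (hε : 0 < ε) (hρ₀ : 0 < ρ) (hρ₁ : ρ < 1) :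
    ∃ f : Zset p ε ρ ≃ₜ Circle × BallSet p ε ρ,
      (∀ u : Zset p ε ρ,
          ((f u).1 : ℂ) = u.val.2 / (‖u.val.2‖ : ℂ) ∧
            ((f u).2).val = u.val.1) ∧
        ∀ u : Zset p ε ρ,
          lowNorm p u.val.1 = ρ * ε ^ 2 ↔ lowNorm p ((f u).2).val = ρ * ε ^ 2 :=
  stmt_13_general p ε ρ hε hρ₁
end

section
/- Suppose f : [0, t₀] → ℝ is nonnegative, differentiable, and satisfies f'(t) ≤ C + C f(t) − (1/C) f(t)² for a constant C > 0. Then f(t) ≤ C'/t for all t ∈ (0, t₀], where C' depends only on C and t₀. -/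
/-!
Compare `f` with the barrier `K / t`. For `K` large in terms of `C` and `t₀` the barrier is a
strict supersolution of `y' = C + C y - y² / C` on `(0, t₀]`: the term `-(K / t)² / C` beats its
derivative `-K / t²`. The barrier blows up at `0` while `f` stays bounded there, so `f` lies below
it at some small time, and a subsolution never crosses a strict supersolution from below.
-/

open Set Filter Topology

theorem le_of_hasDerivAt_le_of_lt_hasDerivAt {φ f f' B B' : ℝ → ℝ} {a b : ℝ}
    (hf : ∀ x ∈ Icc a b, HasDerivAt f (f' x) x) (hB : ∀ x ∈ Icc a b, HasDerivAt B (B' x) x)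
    (hsub : ∀ x ∈ Ico a b, f' x ≤ φ (f x)) (hsuper : ∀ x ∈ Ico a b, φ (B x) < B' x)
    (ha : f a ≤ B a) : ∀ x ∈ Icc a b, f x ≤ B x :=
  fun _ hx => image_le_of_deriv_right_lt_deriv_boundary'
    (fun x hx => (hf x hx).continuousAt.continuousWithinAt)
    (fun x hx => (hf x (Ico_subset_Icc_self hx)).hasDerivWithinAt) ha
    (fun x hx => (hB x hx).continuousAt.continuousWithinAt)
    (fun x hx => (hB x (Ico_subset_Icc_self hx)).hasDerivWithinAt)
    (fun x hx hfB => (hsub x hx).trans_lt (by rw [hfB]; exact hsuper x hx)) hx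

theorem exists_le_div_of_continuousWithinAt {f : ℝ → ℝ} (hf : ContinuousWithinAt f (Ici 0) 0)
    {K t : ℝ} (hK : 0 < K) (ht : 0 < t) : ∃ s ∈ Ioc 0 t, f s ≤ K / s := by
  have hf_bdd : ∀ᶠ s in 𝓝[>] 0, f s < f 0 + 1 :=
    (hf.mono Ioi_subset_Ici_self).eventually_lt continuousWithinAt_const (lt_add_one _)
  have hK_large : ∀ᶠ s in 𝓝[>] (0 : ℝ), f 0 + 1 < K / s := by
    simpa only [div_eq_mul_inv] using
      (tendsto_inv_nhdsGT_zero.const_mul_atTop hK).eventually_gt_atTop (f 0 + 1)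
  obtain ⟨s, hfs, hKs, hs⟩ := (hf_bdd.and (hK_large.and (Ioc_mem_nhdsGT ht))).exists
  exact ⟨s, hs, (hfs.trans hKs).le⟩

theorem hasDerivAt_const_div {K x : ℝ} (hx : x ≠ 0) :
    HasDerivAt (fun s => K / s) (-K / x ^ 2) x := by
  simpa [div_eq_mul_inv] using (hasDerivAt_inv hx).const_mul K

theorem riccati_lt_neg_div_sq {C T K x : ℝ} (hC : 0 < C) (hK : C * ((C + 1) * T + 1) ≤ K)
    (hx : 0 < x) (hxT : x ≤ T) :
    C + C * (K / x) - (K / x) ^ 2 / C < -K / x ^ 2 := by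
  have hCx : C * x < K := by
    nlinarith [mul_le_mul_of_nonneg_left hxT hC.le, mul_pos hC (mul_pos hC (hx.trans_le hxT))]
  have hgap : C * x ≤ K - C - C ^ 2 * x := by nlinarith
  have hK_sq : C ^ 2 * x ^ 2 + C ^ 2 * K * x + C * K < K ^ 2 := by
    nlinarith [mul_le_mul_of_nonneg_left hgap (hCx.le.trans' (by positivity) : 0 ≤ K),
      mul_lt_mul_of_pos_right hCx (by positivity : 0 < C * x)]
  rw [← sub_neg]
  have hcleared : C + C * (K / x) - (K / x) ^ 2 / C - -K / x ^ 2
      = (C ^ 2 * x ^ 2 + C ^ 2 * K * x + C * K - K ^ 2) / (C * x ^ 2) := by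
    field_simp; ring
  rw [hcleared]
  exact div_neg_of_neg_of_pos (by linarith) (by positivity)

theorem stmt_18_general (C t₀ : ℝ) (hC : 0 < C) :
    ∃ C' : ℝ, ∀ f : ℝ → ℝ,
      (∀ t ∈ Set.Icc (0 : ℝ) t₀, 0 ≤ f t) →
      (∀ t ∈ Set.Icc (0 : ℝ) t₀, HasDerivAt f (deriv f t) t) →
      (∀ t ∈ Set.Icc (0 : ℝ) t₀, deriv f t ≤ C + C * f t - (f t) ^ 2 / C) →
      ∀ t ∈ Set.Ioc (0 : ℝ) t₀, f t ≤ C' / t := by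
  refine ⟨C * ((C + 1) * t₀ + 1), fun f _ hf hf_ode t ht => ?_⟩
  set K := C * ((C + 1) * t₀ + 1)
  have ht₀ : 0 ≤ t₀ := ht.1.le.trans ht.2
  have hK : 0 < K := by positivity
  obtain ⟨s, hs, hfs⟩ := exists_le_div_of_continuousWithinAt
    (hf 0 (left_mem_Icc.2 ht₀)).continuousAt.continuousWithinAt hK ht.1
  have hIcc : Icc s t ⊆ Icc 0 t₀ := Icc_subset_Icc hs.1.le ht.2
  refine le_of_hasDerivAt_le_of_lt_hasDerivAt (φ := fun y => C + C * y - y ^ 2 / C)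
    (fun x hx => hf x (hIcc hx)) (fun x hx => hasDerivAt_const_div (hs.1.trans_le hx.1).ne')
    (fun x hx => hf_ode x (hIcc (Ico_subset_Icc_self hx)))
    (fun x hx => riccati_lt_neg_div_sq hC le_rfl (hs.1.trans_le hx.1) (hx.2.le.trans ht.2))
    hfs t (right_mem_Icc.2 hs.2)

/-- ODE lemma behind the parabolic smoothing estimate: if `f ≥ 0` satisfies
`f' ≤ C + C f - f²/C` on `[0, t₀]`, then `f(t) ≤ C'/t` on `(0, t₀]`, where `C'`
depends only on `C` and `t₀`. -/
theorem stmt_18 (C t₀ : ℝ) (hC : 0 < C) (ht₀ : 0 < t₀) :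
    ∃ C' : ℝ, ∀ f : ℝ → ℝ,
      (∀ t ∈ Set.Icc (0 : ℝ) t₀, 0 ≤ f t) →
      (∀ t ∈ Set.Icc (0 : ℝ) t₀, HasDerivAt f (deriv f t) t) →
      (∀ t ∈ Set.Icc (0 : ℝ) t₀, deriv f t ≤ C + C * f t - (f t) ^ 2 / C) →
      ∀ t ∈ Set.Ioc (0 : ℝ) t₀, f t ≤ C' / t :=
  stmt_18_general C t₀ hC
end
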